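/- Let E ∈ ℂ^{n×n} satisfy Eᵀ = E and E² = I_n, set P := (1/√2)(I_n + i·E) (so P is invertible with P^{-1} = (1/√2)(I_n − i·E), Pᵀ = P and P² = iE). Let J ∈ ℂ^{n×n} and S := P^{-1} J P. Then for every Q ∈ ℂ^{n×n}, setting X := P Q P^{-1}, the following are equivalent: (i) QᵀQ = I_n and QᵀSQ = S; (ii) JX = XJ and E Xᵀ E X = I_n. -/

import Mathlib

/-!
Conjugation by `P` turns the two conditions on `Q` into conditions on `X`. The point is that `P`
is symmetric and satisfies `E P⁻¹ = -i P`, `P E = i P⁻¹`, so the twisted transpose `E Xᵀ E` is the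
conjugate `P Qᵀ P⁻¹` of `Qᵀ`. Hence `QᵀQ = 1` and `QᵀSQ = S` become `Y X = 1` and `Y J X = J` with
`Y = E Xᵀ E`; once `Y` is a left inverse of `X` it is also a right inverse (matrices are Dedekind
finite), and then `Y J X = J` says exactly that `J` commutes with `X`.
-/

open Matrix Complex

theorem mul_mul_eq_self_iff_commute {M : Type*} [Monoid M] [IsDedekindFiniteMonoid M]
    {X Y J : M} (hYX : Y * X = 1) : Y * J * X = J ↔ J * X = X * J := by
  have hXY : X * Y = 1 := mul_eq_one_comm.mp hYX
  constructor
  · intro h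
    calc J * X = X * Y * (J * X) := by rw [hXY, one_mul]
      _ = X * (Y * J * X) := by simp only [mul_assoc]
      _ = X * J := by rw [h]
  · intro h
    rw [mul_assoc, h, ← mul_assoc, hYX, one_mul]

theorem conj_inj_of_mul_eq_one {M : Type*} [Monoid M] {P Pinv A B : M}
    (h₁ : P * Pinv = 1) (h₂ : Pinv * P = 1) : P * A * Pinv = P * B * Pinv ↔ A = B := by
  let u : Mˣ := ⟨P, Pinv, h₁, h₂⟩
  exact (Units.mul_left_inj u⁻¹).trans (Units.mul_right_inj u)

theorem conj_mul_conj {M : Type*} [Monoid M] {P Pinv : M} (h : Pinv * P = 1) (A B : M) :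
    P * A * Pinv * (P * B * Pinv) = P * (A * B) * Pinv := by
  simp only [mul_assoc, ← mul_assoc Pinv P, h, one_mul]

theorem mul_transpose_conj_mul {ι R : Type*} [Fintype ι] [CommRing R] {E P Pinv : Matrix ι ι R}
    {a b : R} (hab : a * b = 1) (hPt : Pᵀ = P) (hPinvt : Pinvᵀ = Pinv)
    (hEPinv : E * Pinv = a • P) (hPE : P * E = b • Pinv) (Q : Matrix ι ι R) :
    E * (P * Q * Pinv)ᵀ * E = P * Qᵀ * Pinv := by
  calc E * (P * Q * Pinv)ᵀ * E = E * Pinv * Qᵀ * (P * E) := by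
        simp only [transpose_mul, hPt, hPinvt, mul_assoc]
    _ = P * Qᵀ * Pinv := by
        rw [hEPinv, hPE, smul_mul_assoc, smul_mul_assoc, mul_smul_comm, smul_smul, hab, one_smul]

theorem inv_sqrt_two_smul_mul_inv_sqrt_two_smul {A : Type*} [Ring A] [Algebra ℂ A] (x y : A) :
    ((Real.sqrt 2 : ℂ)⁻¹ • x) * ((Real.sqrt 2 : ℂ)⁻¹ • y) = (2 : ℂ)⁻¹ • (x * y) := by
  rw [smul_mul_smul_comm, ← mul_inv, ← ofReal_mul, Real.mul_self_sqrt zero_le_two, ofReal_ofNat]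

section Involution

variable {ι : Type*} [Fintype ι] [DecidableEq ι] {E : Matrix ι ι ℂ}

theorem one_add_I_smul_mul_one_sub_I_smul (hE2 : E * E = 1) :
    (1 + I • E) * (1 - I • E) = (2 : ℂ) • 1 := by
  simp only [mul_sub, add_mul, one_mul, mul_one, smul_mul_smul_comm, I_mul_I, hE2]
  module

theorem one_sub_I_smul_mul_one_add_I_smul (hE2 : E * E = 1) :
    (1 - I • E) * (1 + I • E) = (2 : ℂ) • 1 := by
  simp only [mul_add, sub_mul, one_mul, mul_one, smul_mul_smul_comm, I_mul_I, hE2]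
  module

theorem mul_one_sub_I_smul (hE2 : E * E = 1) : E * (1 - I • E) = -I • (1 + I • E) := by
  simp only [mul_sub, mul_one, mul_smul_comm, hE2, smul_add, smul_smul, neg_mul, I_mul_I]
  module

theorem one_add_I_smul_mul (hE2 : E * E = 1) : (1 + I • E) * E = I • (1 - I • E) := by
  simp only [add_mul, one_mul, smul_mul_assoc, hE2, smul_sub, smul_smul, I_mul_I]
  module

end Involution

theorem stmt18 (n : ℕ) (E J S Q X P Pinv : Matrix (Fin n) (Fin n) ℂ)
    (hE : Eᵀ = E) (hE2 : E * E = 1)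
    (hP : P = (Real.sqrt 2 : ℂ)⁻¹ • (1 + Complex.I • E))
    (hPinv : Pinv = (Real.sqrt 2 : ℂ)⁻¹ • (1 - Complex.I • E))
    (hS : S = Pinv * J * P)
    (hX : X = P * Q * Pinv) :
    (Qᵀ * Q = 1 ∧ Qᵀ * S * Q = S) ↔ (J * X = X * J ∧ E * Xᵀ * E * X = 1) := by
  have h₁ : P * Pinv = 1 := by
    rw [hP, hPinv, inv_sqrt_two_smul_mul_inv_sqrt_two_smul,
      one_add_I_smul_mul_one_sub_I_smul hE2, inv_smul_smul₀ two_ne_zero]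
  have h₂ : Pinv * P = 1 := by
    rw [hP, hPinv, inv_sqrt_two_smul_mul_inv_sqrt_two_smul,
      one_sub_I_smul_mul_one_add_I_smul hE2, inv_smul_smul₀ two_ne_zero]
  have hPt : Pᵀ = P := by simp [hP, hE]
  have hPinvt : Pinvᵀ = Pinv := by simp [hPinv, hE]
  have hEPinv : E * Pinv = -I • P := by
    rw [hPinv, hP, mul_smul_comm, mul_one_sub_I_smul hE2, smul_comm]
  have hPE : P * E = I • Pinv := by
    rw [hPinv, hP, smul_mul_assoc, one_add_I_smul_mul hE2, smul_comm]
  have hY : E * Xᵀ * E = P * Qᵀ * Pinv :=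
    hX ▸ mul_transpose_conj_mul (by simp) hPt hPinvt hEPinv hPE Q
  have hJ : P * S * Pinv = J := by
    rw [hS]
    simp only [mul_assoc, h₁, mul_one]
    rw [← mul_assoc, h₁, one_mul]
  have hYX : E * Xᵀ * E * X = P * (Qᵀ * Q) * Pinv := by rw [hY, hX, conj_mul_conj h₂]
  have hYJX : E * Xᵀ * E * J * X = P * (Qᵀ * S * Q) * Pinv := by
    rw [hY, hX, ← hJ, conj_mul_conj h₂, conj_mul_conj h₂]
  rw [← conj_inj_of_mul_eq_one h₁ h₂ (A := Qᵀ * Q), ← conj_inj_of_mul_eq_one h₁ h₂ (A := Qᵀ * S * Q),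
    mul_one, h₁, hJ, ← hYX, ← hYJX]
  exact ⟨fun ⟨hYX, hYJX⟩ => ⟨(mul_mul_eq_self_iff_commute hYX).1 hYJX, hYX⟩,
    fun ⟨hJX, hYX⟩ => ⟨hYX, (mul_mul_eq_self_iff_commute hYX).2 hJX⟩⟩
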